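/- In B_n one has r_n r_{n−1} ⋯ r_2 r_1 = d^2, and more generally every cyclic rotation of this product equals d^2: for each k with 1 ≤ k ≤ n, r_k r_{k−1} ⋯ r_1 · r_n r_{n−1} ⋯ r_{k+1} = d^2. -/

import Mathlib

namespace Braid

/-- Braid relations on generators indexed by `Fin m`; the generator `i : Fin m` stands for the
Artin generator `σ_{i+1}` of the braid group on `m+1` strands: the relations are
`σ_i σ_j = σ_j σ_i` for `|i-j| ≥ 2` and `σ_i σ_{i+1} σ_i = σ_{i+1} σ_i σ_{i+1}`. -/
def braidRels (m : ℕ) : Set (FreeGroup (Fin m)) :=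
  {r | ∃ i j : Fin m, i.val + 2 ≤ j.val ∧
      r = .of i * .of j * (.of j * .of i)⁻¹} ∪
  {r | ∃ (i : Fin m) (hij : i.val + 1 < m),
      r = .of i * .of ⟨i.val + 1, hij⟩ * .of i *
        (.of ⟨i.val + 1, hij⟩ * .of i * .of ⟨i.val + 1, hij⟩)⁻¹}

/-- The Artin braid group `B_n` on `n` strands, presented with generators `σ_1, …, σ_{n-1}`
and the braid relations. -/
def BraidGroup (n : ℕ) : Type := PresentedGroup (braidRels (n - 1))

instance (n : ℕ) : Group (BraidGroup n) := by unfold BraidGroup; infer_instance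

/-- The Artin generator `σ_i` of `B_n`, for `1 ≤ i ≤ n-1` (junk value `1` otherwise). -/
def σ (n : ℕ) (i : ℕ) : BraidGroup n :=
  if h : 1 ≤ i ∧ i ≤ n - 1 then PresentedGroup.of ⟨i - 1, by omega⟩ else 1

/-- The ascending product `σ_a σ_{a+1} ⋯ σ_b` (empty product if `b < a`). -/
def up (n a b : ℕ) : BraidGroup n := ((List.range' a (b + 1 - a)).map (σ n)).prod

/-- The descending product `σ_a σ_{a-1} ⋯ σ_b` (empty product if `a < b`). -/
def down (n a b : ℕ) : BraidGroup n :=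
  ((List.range' b (a + 1 - b)).reverse.map (σ n)).prod

/-- The full twist `d = (σ_{n-1} ⋯ σ_2 σ_1)^n` of `B_n`. -/
def fullTwist (n : ℕ) : BraidGroup n := (down n (n - 1) 1) ^ n

/-- The flip `r_i = σ_{i-1} ⋯ σ_2 σ_1^2 σ_2 ⋯ σ_{n-2} σ_{n-1}^2 σ_{n-2} ⋯ σ_i` of `B_n`
(for `1 ≤ i ≤ n`), written as `(σ_{i-1} ⋯ σ_1) (σ_1 ⋯ σ_{n-1}) (σ_{n-1} ⋯ σ_i)`. -/
def flip (n i : ℕ) : BraidGroup n :=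
  down n (i - 1) 1 * up n 1 (n - 1) * down n (n - 1) i

/-- The descending product of flips `r_a r_{a-1} ⋯ r_b` (empty product if `a < b`). -/
def flipsDown (n a b : ℕ) : BraidGroup n :=
  ((List.range' b (a + 1 - b)).reverse.map (flip n)).prod

/-- The subgroup `R_n ⊆ B_n` generated by the full twist `d` and the flips `r_1, …, r_n`. -/
def R (n : ℕ) : Subgroup (BraidGroup n) :=
  Subgroup.closure ({fullTwist n} ∪ flip n '' Set.Icc 1 n)

/-- The subgroup `R_n' ⊆ B_n` generated by the flips `r_1, …, r_n`. -/
def R' (n : ℕ) : Subgroup (BraidGroup n) :=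
  Subgroup.closure (flip n '' Set.Icc 1 n)

private lemma swap_braid {n : ℕ} (a b c : Fin n) (hab : a ≠ b) (hbc : b ≠ c) (hac : a ≠ c) :
    Equiv.swap a b * Equiv.swap b c * Equiv.swap a b
      = Equiv.swap b c * Equiv.swap a b * Equiv.swap b c := by
  have h1 : Equiv.swap b a * Equiv.swap c b * Equiv.swap b a = Equiv.swap a c :=
    Equiv.swap_mul_swap_mul_swap (Ne.symm hbc) hac.symm
  have h2 : Equiv.swap b c * Equiv.swap a b * Equiv.swap b c = Equiv.swap c a :=
    Equiv.swap_mul_swap_mul_swap hab hac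
  rw [h2, Equiv.swap_comm a b, Equiv.swap_comm b c, h1, Equiv.swap_comm a c]

private lemma swap_commute {n : ℕ} (a b c d : Fin n)
    (hac : a ≠ c) (had : a ≠ d) (hbc : b ≠ c) (hbd : b ≠ d) :
    Equiv.swap a b * Equiv.swap c d = Equiv.swap c d * Equiv.swap a b := by
  refine Equiv.Perm.Disjoint.commute ?_
  intro x
  by_cases h1 : x = a
  · subst h1; right; exact Equiv.swap_apply_of_ne_of_ne hac had
  · by_cases h2 : x = b
    · subst h2; right; exact Equiv.swap_apply_of_ne_of_ne hbc hbd
    · left; exact Equiv.swap_apply_of_ne_of_ne h1 h2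

/-- The transposition `(i, i+1)` of `Fin n` associated to the generator `i : Fin (n-1)`. -/
def permGen (n : ℕ) (i : Fin (n - 1)) : Equiv.Perm (Fin n) :=
  Equiv.swap ⟨i.val, by have := i.isLt; omega⟩ ⟨i.val + 1, by have := i.isLt; omega⟩

/-- The homomorphism `B_n → Sym(n)` sending `σ_i` to the transposition `(i, i+1)`. -/
def toPerm (n : ℕ) : BraidGroup n →* Equiv.Perm (Fin n) :=
  PresentedGroup.toGroup (f := permGen n)
    (by
      rintro r (⟨i, j, hij, rfl⟩ | ⟨i, hij, rfl⟩) <;>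
        simp only [map_mul, map_inv, FreeGroup.lift_apply_of, permGen] <;> rw [mul_inv_eq_one]
      · refine swap_commute _ _ _ _ ?_ ?_ ?_ ?_ <;>
          · rw [ne_eq, Fin.mk.injEq]; omega
      · refine swap_braid _ _ _ ?_ ?_ ?_ <;>
          · rw [ne_eq, Fin.mk.injEq]; omega)

/-- The pure braid group `P_n`: the kernel of `B_n → Sym(n)`, `σ_i ↦ (i, i+1)`. -/
def P (n : ℕ) : Subgroup (BraidGroup n) := (toPerm n).ker

private lemma mk_rel_eq_one {m : ℕ} {r : FreeGroup (Fin m)} (h : r ∈ braidRels m) :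
    PresentedGroup.mk (braidRels m) r = 1 :=
  (QuotientGroup.eq_one_iff _).mpr (Subgroup.subset_normalClosure h)

lemma σ_comm {n i j : ℕ} (h1 : 1 ≤ i) (h2 : i + 2 ≤ j) (h3 : j ≤ n - 1) :
    σ n i * σ n j = σ n j * σ n i := by
  rw [show σ n i = PresentedGroup.of (⟨i - 1, by omega⟩ : Fin (n - 1)) from
      dif_pos ⟨h1, by omega⟩,
    show σ n j = PresentedGroup.of (⟨j - 1, by omega⟩ : Fin (n - 1)) from
      dif_pos ⟨by omega, h3⟩]
  have hmem : (FreeGroup.of (⟨i - 1, by omega⟩ : Fin (n-1)) * .of ⟨j - 1, by omega⟩ *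
      (.of ⟨j - 1, by omega⟩ * .of ⟨i - 1, by omega⟩)⁻¹) ∈ braidRels (n - 1) :=
    Or.inl ⟨⟨i - 1, by omega⟩, ⟨j - 1, by omega⟩, by show i - 1 + 2 ≤ j - 1; omega, rfl⟩
  have h := mk_rel_eq_one hmem
  rw [map_mul, map_inv, mul_inv_eq_one, map_mul, map_mul] at h
  exact h

set_option maxHeartbeats 1600000 in
lemma σ_braid {n i : ℕ} (h1 : 1 ≤ i) (h2 : i + 1 ≤ n - 1) :
    σ n i * σ n (i + 1) * σ n i = σ n (i + 1) * σ n i * σ n (i + 1) := by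
  rw [show σ n i = PresentedGroup.of (⟨i - 1, by omega⟩ : Fin (n - 1)) from
      dif_pos ⟨h1, by omega⟩,
    show σ n (i + 1) = PresentedGroup.of (⟨i + 1 - 1, by omega⟩ : Fin (n - 1)) from
      dif_pos ⟨by omega, h2⟩]
  have key : (⟨i + 1 - 1, by omega⟩ : Fin (n - 1)) = ⟨(i - 1) + 1, by omega⟩ := by
    rw [Fin.mk.injEq]; omega
  rw [key]
  have hmem : (FreeGroup.of (⟨i - 1, by omega⟩ : Fin (n-1)) * .of ⟨(i-1) + 1, by omega⟩ *
      .of ⟨i - 1, by omega⟩ *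
      (.of ⟨(i-1) + 1, by omega⟩ * .of ⟨i - 1, by omega⟩ * .of ⟨(i-1)+1, by omega⟩)⁻¹)
      ∈ braidRels (n - 1) :=
    Or.inr ⟨⟨i - 1, by omega⟩, by show i - 1 + 1 < n - 1; omega, rfl⟩
  have h := mk_rel_eq_one hmem
  rw [map_mul, map_inv, mul_inv_eq_one, map_mul, map_mul, map_mul, map_mul] at h
  exact h

/-- The canonical homomorphism `ι : B_{n-1} → B_n` determined by `σ_i ↦ σ_i`. -/
def ι (n : ℕ) : BraidGroup (n - 1) →* BraidGroup n :=
  PresentedGroup.toGroup (f := fun i : Fin (n - 1 - 1) => σ n (i.val + 1))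
    (by
      rintro r (⟨i, j, hij, rfl⟩ | ⟨i, hij, rfl⟩) <;>
        simp only [map_mul, map_inv, FreeGroup.lift_apply_of] <;> rw [mul_inv_eq_one]
      · exact σ_comm (by omega) (by omega) (by have := j.isLt; omega)
      · exact σ_braid (by omega) (by have := i.isLt; omega))

end Braid

/-!
Write `u = σ_1 ⋯ σ_{n-1}` and `δ = σ_{n-1} ⋯ σ_1`, so that `r_1 = u δ`, `r_n = δ u` and `d = δ^n`.
Conjugation by `u` sends `σ_i` to `σ_{i+1}` for `i < n - 1`, and `u²` conjugates `σ_{n-1}` to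
`σ_1`; hence `u r_i u⁻¹ = r_{i+1}`, and the product telescopes to `r_j ⋯ r_1 = u^j δ^j`.
The half twist `Δ` conjugates `σ_i` to `σ_{n-i}`, hence `u` to `δ`. Since `u^n` commutes with every
generator it is central, so `δ^n = Δ u^n Δ⁻¹ = u^n` and `r_n ⋯ r_1 = u^n δ^n = d²`. Each cyclic
rotation of this product is conjugate to it, hence equal to the central element `d²`.
-/

lemma mem_range'_sub_iff {a b k : ℕ} : k ∈ List.range' a (b + 1 - a) ↔ a ≤ k ∧ k ≤ b := by
  rw [List.mem_range'_1]
  omega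

lemma range'_one_reverse (m : ℕ) :
    (List.range' 1 m).reverse = (List.range' 1 m).map (m + 1 - ·) := by
  refine List.ext_getElem (by simp) fun i h₁ _ => ?_
  simp only [List.getElem_reverse, List.getElem_map, List.getElem_range', List.length_range']
  simp only [List.length_reverse, List.length_range'] at h₁
  omega

section ListProd

variable {M : Type*} [Monoid M]

lemma SemiconjBy.list_map_prod {ι : Type*} {x : M} {f g : ι → M} (l : List ι)
    (h : ∀ i ∈ l, SemiconjBy x (f i) (g i)) :
    SemiconjBy x (l.map f).prod (l.map g).prod := by
  induction l with
  | nil => exact SemiconjBy.one_right x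
  | cons i l ih =>
    simp only [List.map_cons, List.prod_cons]
    exact (h i List.mem_cons_self).mul_right (ih fun j hj => h j (List.mem_cons_of_mem i hj))

lemma SemiconjBy.pow_left_of_succ {a : M} {f : ℕ → M} {i : ℕ} :
    ∀ m : ℕ, (∀ k, i ≤ k → k < i + m → SemiconjBy a (f k) (f (k + 1))) →
      SemiconjBy (a ^ m) (f i) (f (i + m))
  | 0, _ => by rw [pow_zero, add_zero]; exact SemiconjBy.one_left (f i)
  | m + 1, h => by
    rw [pow_succ', ← add_assoc]
    exact (h (i + m) (by omega) (by omega)).mul_left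
      (pow_left_of_succ m fun k hk hkm => h k hk (by omega))

def ascProd (f : ℕ → M) (a b : ℕ) : M := ((List.range' a (b + 1 - a)).map f).prod

def descProd (f : ℕ → M) (a b : ℕ) : M := ((List.range' b (a + 1 - b)).reverse.map f).prod

variable (f : ℕ → M) {a b c : ℕ}

lemma ascProd_of_lt (h : b < a) : ascProd f a b = 1 := by
  rw [ascProd, show b + 1 - a = 0 by omega, List.range'_zero, List.map_nil, List.prod_nil]

lemma descProd_of_lt (h : a < b) : descProd f a b = 1 := by
  rw [descProd, show a + 1 - b = 0 by omega, List.range'_zero, List.reverse_nil, List.map_nil,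
    List.prod_nil]

lemma ascProd_append (h₁ : a ≤ c + 1) (h₂ : c ≤ b) :
    ascProd f a b = ascProd f a c * ascProd f (c + 1) b := by
  have split : List.range' a (b + 1 - a)
      = List.range' a (c + 1 - a) ++ List.range' (c + 1) (b + 1 - (c + 1)) := by
    have h := List.range'_append_1 (s := a) (m := c + 1 - a) (n := b + 1 - (c + 1))
    rwa [show a + (c + 1 - a) = c + 1 by omega,
      show c + 1 - a + (b + 1 - (c + 1)) = b + 1 - a by omega, eq_comm] at h
  rw [ascProd, ascProd, ascProd, split, List.map_append, List.prod_append]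

lemma descProd_append (h₁ : b ≤ c + 1) (h₂ : c ≤ a) :
    descProd f a b = descProd f a (c + 1) * descProd f c b := by
  have split : List.range' b (a + 1 - b)
      = List.range' b (c + 1 - b) ++ List.range' (c + 1) (a + 1 - (c + 1)) := by
    have h := List.range'_append_1 (s := b) (m := c + 1 - b) (n := a + 1 - (c + 1))
    rwa [show b + (c + 1 - b) = c + 1 by omega,
      show c + 1 - b + (a + 1 - (c + 1)) = a + 1 - b by omega, eq_comm] at h
  rw [descProd, descProd, descProd, split, List.reverse_append, List.map_append,
    List.prod_append]

lemma ascProd_eq_mul (h : a ≤ b) : ascProd f a b = f a * ascProd f (a + 1) b := by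
  rw [ascProd, ascProd, show b + 1 - a = (b + 1 - (a + 1)) + 1 by omega, List.range'_succ,
    List.map_cons, List.prod_cons]

lemma ascProd_succ (h : a ≤ b + 1) : ascProd f a (b + 1) = ascProd f a b * f (b + 1) := by
  rw [ascProd_append f h le_self_add]
  congr 1
  rw [ascProd, show b + 1 + 1 - (b + 1) = 1 by omega, List.range'_one, List.map_singleton,
    List.prod_singleton]

lemma descProd_succ (h : b ≤ a + 1) : descProd f (a + 1) b = f (a + 1) * descProd f a b := by
  rw [descProd_append f h le_self_add]
  congr 1
  rw [descProd, show a + 1 + 1 - (a + 1) = 1 by omega, List.range'_one, List.reverse_singleton,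
    List.map_singleton, List.prod_singleton]

lemma descProd_eq_mul (h : b ≤ a) : descProd f a b = descProd f a (b + 1) * f b := by
  rw [descProd, descProd, show a + 1 - b = (a + 1 - (b + 1)) + 1 by omega, List.range'_succ,
    List.reverse_cons, List.map_append, List.prod_append, List.map_singleton,
    List.prod_singleton]

variable {f} {x : M}

lemma semiconjBy_ascProd (h : ∀ k, a ≤ k → k ≤ b → SemiconjBy x (f k) (f (k + 1))) :
    SemiconjBy x (ascProd f a b) (ascProd f (a + 1) (b + 1)) := by
  rw [ascProd, ascProd, show b + 1 + 1 - (a + 1) = b + 1 - a by omega, List.range'_succ_left,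
    List.map_map]
  exact SemiconjBy.list_map_prod _ fun k hk => (mem_range'_sub_iff.1 hk).elim (h k)

lemma semiconjBy_descProd (h : ∀ k, b ≤ k → k ≤ a → SemiconjBy x (f k) (f (k + 1))) :
    SemiconjBy x (descProd f a b) (descProd f (a + 1) (b + 1)) := by
  rw [descProd, descProd, show a + 1 + 1 - (b + 1) = a + 1 - b by omega, List.range'_succ_left,
    ← List.map_reverse, List.map_map]
  exact SemiconjBy.list_map_prod _ fun k hk =>
    (mem_range'_sub_iff.1 (List.mem_reverse.1 hk)).elim (h k)

lemma commute_ascProd (h : ∀ k, a ≤ k → k ≤ b → Commute x (f k)) : Commute x (ascProd f a b) :=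
  SemiconjBy.list_map_prod _ fun k hk => (mem_range'_sub_iff.1 hk).elim (h k)

lemma commute_descProd (h : ∀ k, b ≤ k → k ≤ a → Commute x (f k)) :
    Commute x (descProd f a b) :=
  SemiconjBy.list_map_prod _ fun k hk =>
    (mem_range'_sub_iff.1 (List.mem_reverse.1 hk)).elim (h k)

end ListProd

namespace Braid

lemma σ_eq_one {n i : ℕ} (h : ¬(1 ≤ i ∧ i ≤ n - 1)) : σ n i = 1 := dif_neg h

lemma σ_commute (n : ℕ) {i j : ℕ} (h : i + 2 ≤ j) : Commute (σ n i) (σ n j) := by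
  by_cases hi : 1 ≤ i
  · by_cases hj : j ≤ n - 1
    · exact σ_comm hi h hj
    · rw [σ_eq_one (i := j) (by omega)]; exact Commute.one_right _
  · rw [σ_eq_one (by omega)]; exact Commute.one_left _

lemma semiconjBy_σ_mul_σ_succ {n j : ℕ} (h₁ : 1 ≤ j) (h₂ : j + 1 ≤ n - 1) :
    SemiconjBy (σ n j * σ n (j + 1)) (σ n j) (σ n (j + 1)) := by
  rw [SemiconjBy, σ_braid h₁ h₂, mul_assoc]

lemma semiconjBy_σ_succ_mul_σ {n j : ℕ} (h₁ : 1 ≤ j) (h₂ : j + 1 ≤ n - 1) :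
    SemiconjBy (σ n (j + 1) * σ n j) (σ n (j + 1)) (σ n j) := by
  rw [SemiconjBy, ← σ_braid h₁ h₂, mul_assoc]

lemma mem_center_of_commute_σ {n : ℕ} {z : BraidGroup n} (h : ∀ i, Commute z (σ n i)) :
    z ∈ Subgroup.center (BraidGroup n) := by
  refine Subgroup.mem_center_iff.2 fun g => Subgroup.mem_centralizer_singleton_iff.1 <|
    PresentedGroup.generated_by _ _ (fun j => ?_) g
  have hj : σ n (j.val + 1) = PresentedGroup.of j := dif_pos ⟨by omega, by omega⟩
  exact Subgroup.mem_centralizer_singleton_iff.2 (hj ▸ (h _).eq.symm)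

section Products

variable {n a b c : ℕ}

lemma up_of_lt (h : b < a) : up n a b = 1 := ascProd_of_lt _ h

lemma down_of_lt (h : a < b) : down n a b = 1 := descProd_of_lt _ h

lemma up_append (h₁ : a ≤ c + 1) (h₂ : c ≤ b) : up n a b = up n a c * up n (c + 1) b :=
  ascProd_append _ h₁ h₂

lemma down_append (h₁ : b ≤ c + 1) (h₂ : c ≤ a) : down n a b = down n a (c + 1) * down n c b :=
  descProd_append _ h₁ h₂

lemma up_eq_σ_mul (h : a ≤ b) : up n a b = σ n a * up n (a + 1) b := ascProd_eq_mul _ h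

lemma up_succ (h : a ≤ b + 1) : up n a (b + 1) = up n a b * σ n (b + 1) := ascProd_succ _ h

lemma down_succ (h : b ≤ a + 1) : down n (a + 1) b = σ n (a + 1) * down n a b :=
  descProd_succ _ h

lemma down_eq_mul_σ (h : b ≤ a) : down n a b = down n a (b + 1) * σ n b := descProd_eq_mul _ h

lemma flipsDown_succ (h : b ≤ a + 1) : flipsDown n (a + 1) b = flip n (a + 1) * flipsDown n a b :=
  descProd_succ _ h

lemma flipsDown_append (h₁ : b ≤ c + 1) (h₂ : c ≤ a) :
    flipsDown n a b = flipsDown n a (c + 1) * flipsDown n c b :=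
  descProd_append _ h₁ h₂

lemma semiconjBy_up {x : BraidGroup n}
    (h : ∀ k, a ≤ k → k ≤ b → SemiconjBy x (σ n k) (σ n (k + 1))) :
    SemiconjBy x (up n a b) (up n (a + 1) (b + 1)) :=
  semiconjBy_ascProd h

lemma semiconjBy_down {x : BraidGroup n}
    (h : ∀ k, b ≤ k → k ≤ a → SemiconjBy x (σ n k) (σ n (k + 1))) :
    SemiconjBy x (down n a b) (down n (a + 1) (b + 1)) :=
  semiconjBy_descProd h

lemma commute_σ_up {j : ℕ} (h : b + 2 ≤ j ∨ j + 2 ≤ a) : Commute (σ n j) (up n a b) :=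
  commute_ascProd fun _ hak hkb =>
    h.elim (fun h => (σ_commute n (by omega)).symm) (fun h => σ_commute n (by omega))

lemma commute_σ_down {j : ℕ} (h : a + 2 ≤ j ∨ j + 2 ≤ b) : Commute (σ n j) (down n a b) :=
  commute_descProd fun _ hbk hka =>
    h.elim (fun h => (σ_commute n (by omega)).symm) (fun h => σ_commute n (by omega))

end Products

lemma semiconjBy_up_σ {n a j m : ℕ} (ha : 1 ≤ a) (haj : a ≤ j) (hjm : j < m) (hm : m ≤ n - 1) :
    SemiconjBy (up n a m) (σ n j) (σ n (j + 1)) := by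
  obtain ⟨i, rfl⟩ : ∃ i, j = i + 1 := ⟨j - 1, by omega⟩
  -- `σ_j` crosses the block `σ_j σ_{j+1}` by the braid relation and commutes with the rest.
  have split : up n a m = up n a i * (σ n (i + 1) * σ n (i + 2)) * up n (i + 3) m := by
    rw [up_append (c := i) (by omega) (by omega), up_eq_σ_mul (a := i + 1) (by omega),
      up_eq_σ_mul (a := i + 1 + 1) (by omega)]
    simp only [mul_assoc]
  rw [split]
  exact SemiconjBy.mul_left
    (SemiconjBy.mul_left (commute_σ_up (Or.inl (by omega))).symm
      (semiconjBy_σ_mul_σ_succ (by omega) (by omega)))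
    (commute_σ_up (Or.inr (by omega))).symm

lemma semiconjBy_down_σ {n b j m : ℕ} (hb : 1 ≤ b) (hbj : b ≤ j) (hjm : j < m) (hm : m ≤ n - 1) :
    SemiconjBy (down n m b) (σ n (j + 1)) (σ n j) := by
  obtain ⟨i, rfl⟩ : ∃ i, j = i + 1 := ⟨j - 1, by omega⟩
  have split : down n m b = down n m (i + 3) * (σ n (i + 2) * σ n (i + 1)) * down n i b := by
    rw [down_append (c := i + 2) (by omega) (by omega), down_succ (a := i + 1) (by omega),
      down_succ (a := i) (by omega)]
    simp only [mul_assoc]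
  rw [split]
  exact SemiconjBy.mul_left
    (SemiconjBy.mul_left (commute_σ_down (Or.inr (by omega))).symm
      (semiconjBy_σ_succ_mul_σ (by omega) (by omega)))
    (commute_σ_down (Or.inl (by omega))).symm

lemma semiconjBy_up_sq_σ {n : ℕ} (hn : 2 ≤ n) :
    SemiconjBy (up n 1 (n - 1) ^ 2) (σ n (n - 1)) (σ n 1) := by
  have hlast : up n 1 (n - 1) = up n 1 (n - 2) * σ n (n - 1) := by
    rw [show n - 1 = n - 2 + 1 by omega, up_succ (by omega)]
  have hfirst : up n 1 (n - 1) = σ n 1 * up n 2 (n - 1) := up_eq_σ_mul (by omega)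
  have hshift : up n 1 (n - 1) * up n 1 (n - 2) = up n 2 (n - 1) * up n 1 (n - 1) := by
    have h := (semiconjBy_up (a := 1) (b := n - 2) fun k hk hkn =>
      semiconjBy_up_σ (n := n) le_rfl hk (by omega) le_rfl).eq
    rwa [show n - 2 + 1 = n - 1 by omega] at h
  calc up n 1 (n - 1) ^ 2 * σ n (n - 1)
      = σ n 1 * up n 2 (n - 1) * up n 1 (n - 1) * σ n (n - 1) := by rw [sq, ← hfirst]
    _ = σ n 1 * (up n 1 (n - 1) * (up n 1 (n - 2) * σ n (n - 1))) := by
        rw [mul_assoc (σ n 1), ← hshift]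
        simp only [mul_assoc]
    _ = σ n 1 * up n 1 (n - 1) ^ 2 := by rw [← hlast, sq]

lemma up_pow_semiconjBy_σ {n i m : ℕ} (hi : 1 ≤ i) (him : i + m ≤ n - 1) :
    SemiconjBy (up n 1 (n - 1) ^ m) (σ n i) (σ n (i + m)) :=
  SemiconjBy.pow_left_of_succ m fun k hik hkm =>
    semiconjBy_up_σ le_rfl (by omega) (by omega) le_rfl

lemma up_pow_mem_center {n : ℕ} (hn : 2 ≤ n) :
    up n 1 (n - 1) ^ n ∈ Subgroup.center (BraidGroup n) := by
  refine mem_center_of_commute_σ fun i => ?_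
  by_cases hi : 1 ≤ i ∧ i ≤ n - 1
  · have split : up n 1 (n - 1) ^ n
        = up n 1 (n - 1) ^ (i - 1) * up n 1 (n - 1) ^ 2 * up n 1 (n - 1) ^ (n - 1 - i) := by
      rw [← pow_add, ← pow_add]
      congr 1
      omega
    rw [split]
    have h₁ := up_pow_semiconjBy_σ (n := n) (m := n - 1 - i) hi.1 (by omega)
    have h₃ := up_pow_semiconjBy_σ (n := n) (m := i - 1) le_rfl (by omega)
    rw [show i + (n - 1 - i) = n - 1 by omega] at h₁
    rw [show 1 + (i - 1) = i by omega] at h₃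
    exact (h₃.mul_left (semiconjBy_up_sq_σ hn)).mul_left h₁
  · rw [σ_eq_one hi]
    exact Commute.one_right _

-- `halfTwist n k` is Garside's fundamental braid `Δ_k` on the first `k` strands.
def halfTwist (n : ℕ) : ℕ → BraidGroup n
  | 0 => 1
  | k + 1 => up n 1 k * halfTwist n k

lemma halfTwist_succ (n k : ℕ) : halfTwist n (k + 1) = up n 1 k * halfTwist n k := rfl

lemma halfTwist_one (n : ℕ) : halfTwist n 1 = 1 := by
  rw [halfTwist_succ, up_of_lt zero_lt_one, one_mul]
  rfl

lemma commute_σ_halfTwist {n j : ℕ} : ∀ {k : ℕ}, k < j → Commute (σ n j) (halfTwist n k)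
  | 0, _ => Commute.one_right _
  | k + 1, h => (commute_σ_up (Or.inl (by omega))).mul_right (commute_σ_halfTwist (by omega))

lemma halfTwist_succ_eq_mul_down (n : ℕ) :
    ∀ k : ℕ, halfTwist n (k + 1) = halfTwist n k * down n k 1
  | 0 => by rw [halfTwist_one, down_of_lt zero_lt_one, mul_one]; rfl
  | k + 1 => calc
      halfTwist n (k + 2) = up n 1 k * σ n (k + 1) * (halfTwist n k * down n k 1) := by
        rw [halfTwist_succ, halfTwist_succ_eq_mul_down n k, up_succ (by omega)]
      _ = up n 1 k * halfTwist n k * (σ n (k + 1) * down n k 1) := by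
        rw [mul_assoc, ← mul_assoc (σ n (k + 1)), (commute_σ_halfTwist k.lt_succ_self).eq]
        simp only [mul_assoc]
      _ = halfTwist n (k + 1) * down n (k + 1) 1 := by
        rw [← down_succ (by omega), ← halfTwist_succ]

lemma semiconjBy_halfTwist_σ {n : ℕ} :
    ∀ {k i : ℕ}, k ≤ n → 1 ≤ i → i < k → SemiconjBy (halfTwist n k) (σ n i) (σ n (k - i))
  | 0, _, _, _, h => absurd h (Nat.not_lt_zero _)
  | k + 1, i, hk, hi, hik => by
    rcases Nat.lt_or_ge i k with hik' | hik'
    · rw [halfTwist_succ, show k + 1 - i = k - i + 1 by omega]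
      exact (semiconjBy_up_σ le_rfl (by omega) (by omega) (by omega)).mul_left
        (semiconjBy_halfTwist_σ (by omega) hi hik')
    · obtain rfl : i = k := by omega
      rw [halfTwist_succ_eq_mul_down, Nat.add_sub_cancel_left]
      rcases Nat.lt_or_ge i 2 with hi2 | hi2
      · obtain rfl : i = 1 := by omega
        rw [halfTwist_one, one_mul, show down n 1 1 = σ n 1 * down n 0 1 from down_succ le_rfl,
          down_of_lt zero_lt_one, mul_one]
        exact Commute.refl _
      · have hΔ := semiconjBy_halfTwist_σ (n := n) (k := i) (i := i - 1)
          (by omega) (by omega) (by omega)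
        have hd := semiconjBy_down_σ (n := n) (b := 1) (j := i - 1) (m := i)
          le_rfl (by omega) (by omega) (by omega)
        rw [show i - (i - 1) = 1 by omega] at hΔ
        rw [Nat.sub_add_cancel (by omega)] at hd
        exact hΔ.mul_left hd

lemma semiconjBy_halfTwist_up {n : ℕ} (hn : 1 ≤ n) :
    SemiconjBy (halfTwist n n) (up n 1 (n - 1)) (down n (n - 1) 1) := by
  rw [up, down, range'_one_reverse, List.map_map]
  refine SemiconjBy.list_map_prod _ fun k hk => ?_
  obtain ⟨hk₁, hk₂⟩ := mem_range'_sub_iff.1 hk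
  rw [Function.comp_apply, show n - 1 + 1 - 1 + 1 - k = n - k by omega]
  exact semiconjBy_halfTwist_σ le_rfl hk₁ (by omega)

lemma up_pow_eq_down_pow {n : ℕ} (hn : 2 ≤ n) :
    up n 1 (n - 1) ^ n = down n (n - 1) 1 ^ n := by
  have hconj := ((semiconjBy_halfTwist_up (n := n) (by omega)).pow_right n).eq
  have hcomm := Subgroup.mem_center_iff.1 (up_pow_mem_center hn) (halfTwist n n)
  exact mul_right_cancel (hcomm.symm.trans hconj)

lemma fullTwist_eq_up_pow {n : ℕ} (hn : 2 ≤ n) : fullTwist n = up n 1 (n - 1) ^ n :=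
  (up_pow_eq_down_pow hn).symm

lemma fullTwist_mem_center {n : ℕ} (hn : 2 ≤ n) : fullTwist n ∈ Subgroup.center (BraidGroup n) :=
  fullTwist_eq_up_pow hn ▸ up_pow_mem_center hn

lemma flip_one (n : ℕ) : flip n 1 = up n 1 (n - 1) * down n (n - 1) 1 := by
  rw [flip, Nat.sub_self, down_of_lt zero_lt_one, one_mul]

lemma semiconjBy_flip {n i : ℕ} (hi : 1 ≤ i) (hin : i ≤ n - 1) :
    SemiconjBy (up n 1 (n - 1)) (flip n i) (flip n (i + 1)) := by
  have hu : ∀ k, 1 ≤ k → k ≤ n - 2 → SemiconjBy (up n 1 (n - 1)) (σ n k) (σ n (k + 1)) :=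
    fun k hk hkn => semiconjBy_up_σ le_rfl hk (by omega) le_rfl
  have hleft : SemiconjBy (up n 1 (n - 1)) (down n (i - 1) 1) (down n i 2) := by
    have h := semiconjBy_down (a := i - 1) (b := 1) fun k hk hki => hu k hk (by omega)
    rwa [Nat.sub_add_cancel hi] at h
  have hright : SemiconjBy (up n 1 (n - 1)) (down n (n - 2) i) (down n (n - 1) (i + 1)) := by
    have h := semiconjBy_down (a := n - 2) (b := i) fun k hik hkn => hu k (by omega) hkn
    rwa [show n - 2 + 1 = n - 1 by omega] at h
  have hmid : SemiconjBy (up n 1 (n - 1)) (up n 1 (n - 1) * σ n (n - 1))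
      (σ n 1 * up n 1 (n - 1)) := by
    have h := semiconjBy_up_sq_σ (n := n) (by omega)
    rwa [SemiconjBy, sq, mul_assoc, ← mul_assoc (σ n 1)] at h
  have hflip :
      flip n i = down n (i - 1) 1 * (up n 1 (n - 1) * σ n (n - 1)) * down n (n - 2) i := by
    have h := down_succ (n := n) (a := n - 2) (b := i) (by omega)
    rw [show n - 2 + 1 = n - 1 by omega] at h
    rw [flip, h]
    simp only [mul_assoc]
  have hflip' : flip n (i + 1)
      = down n i 2 * (σ n 1 * up n 1 (n - 1)) * down n (n - 1) (i + 1) := by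
    rw [flip, Nat.add_sub_cancel, down_eq_mul_σ hi]
    simp only [mul_assoc]
  rw [hflip, hflip']
  exact (hleft.mul_right hmid).mul_right hright

lemma flipsDown_eq_up_pow_mul_down_pow {n : ℕ} :
    ∀ j : ℕ, j ≤ n → flipsDown n j 1 = up n 1 (n - 1) ^ j * down n (n - 1) 1 ^ j
  | 0, _ => by rw [pow_zero, pow_zero, mul_one]; exact descProd_of_lt _ zero_lt_one
  | j + 1, hj => by
    have hshift : SemiconjBy (up n 1 (n - 1) ^ j) (flip n 1) (flip n (1 + j)) :=
      SemiconjBy.pow_left_of_succ j fun k hk hkj => semiconjBy_flip hk (by omega)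
    rw [add_comm 1 j] at hshift
    rw [flipsDown_succ le_add_self, flipsDown_eq_up_pow_mul_down_pow j (by omega), ← mul_assoc,
      ← hshift.eq, flip_one, pow_succ, pow_succ']
    simp only [mul_assoc]

/-- `r_n r_{n-1} ⋯ r_2 r_1 = d^2`, and every cyclic rotation of this product also equals `d^2`:
for `1 ≤ k ≤ n`, `(r_k r_{k-1} ⋯ r_1) (r_n r_{n-1} ⋯ r_{k+1}) = d^2`. -/
theorem flips_prod_eq_fullTwist_sq (n : ℕ) (hn : 2 ≤ n) :
    flipsDown n n 1 = fullTwist n ^ 2 ∧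
    ∀ k : ℕ, 1 ≤ k → k ≤ n →
      flipsDown n k 1 * flipsDown n n (k + 1) = fullTwist n ^ 2 := by
  have hprod : flipsDown n n 1 = fullTwist n ^ 2 := by
    rw [flipsDown_eq_up_pow_mul_down_pow n le_rfl, ← fullTwist_eq_up_pow hn, sq]
    rfl
  refine ⟨hprod, fun k _ hkn => ?_⟩
  have hsplit : flipsDown n n (k + 1) * flipsDown n k 1 = fullTwist n ^ 2 := by
    rw [← flipsDown_append (by omega) hkn, hprod]
  have hconj : IsConj (flipsDown n k 1 * flipsDown n n (k + 1)) (fullTwist n ^ 2) :=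
    isConj_iff.2 ⟨flipsDown n n (k + 1), by rw [← hsplit]; group⟩
  exact hconj.eq_of_right_mem_center (pow_mem (fullTwist_mem_center hn) 2)

end Braid
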